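/- arXiv:2504.07503 — 2 statements merged into one kernel-verified Lean document; each statement's English description precedes it below -/
import Mathlib

section
/- Let B ∈ ℝ^{m×n} be a matrix such that: (i) there is a column index j₀ so that every column of B other than column j₀ contains at most one nonzero entry, and (ii) for every row index i and every sign vector ε ∈ {−1,1}^n, ∑_{j=1}^n ε_j B_{ij} ≠ 0. Then the linear functional f(k) = ∑_{i=1}^m k_i B_{i j₀} is a characteristic linear function of the L1 minimization problem: for every a ∈ ℝ^n and any two minimizers k¹, k² ∈ O_a, one has ∑_{i=1}^m k¹_i B_{i j₀} = ∑_{i=1}^m k²_i B_{i j₀}. -/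
/-- The L1 objective `‖a - k B‖₁ = ∑ j, |a j - ∑ i, k i * B i j|`. -/
def l1Obj {m n : ℕ} (B : Matrix (Fin m) (Fin n) ℝ) (a : Fin n → ℝ) (k : Fin m → ℝ) : ℝ :=
  ∑ j, |a j - ∑ i, k i * B i j|

/-- The optimal set `O_a`: the set of minimizers of the L1 objective. -/
def optSet {m n : ℕ} (B : Matrix (Fin m) (Fin n) ℝ) (a : Fin n → ℝ) : Set (Fin m → ℝ) :=
  {k | ∀ k' : Fin m → ℝ, l1Obj B a k ≤ l1Obj B a k'}

/-! Two minimizers `k₁, k₂` have a minimizing midpoint, and equality in the triangle inequality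
forces every zero of the midpoint's residual to be a common zero of the residuals of `k₁` and
`k₂`. At a minimizer, each row `i` meets some column with zero residual in a nonzero entry:
otherwise the objective along `k + t eᵢ` is affine near `t = 0` with slope `-∑ j, ε j * B i j`
for a sign vector `ε`, which the sign condition makes nonzero. If `k₁ i ≠ k₂ i`, such a common
zero column `j` of row `i` cannot be one of the columns with a single nonzero entry, since there
`k₁ B` and `k₂ B` differ by `(k₁ i - k₂ i) * B i j`; so `j = j₀`, where `k₁ B` and `k₂ B` both
equal `a`. -/

open Filter Topology Matrix

lemma abs_sub_eq_abs_sub_sign_mul {r c : ℝ} (h : |c| ≤ |r|) :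
    |r - c| = |r| - (if 0 ≤ r then 1 else -1) * c := by
  obtain ⟨hc₁, hc₂⟩ := abs_le.mp h
  split_ifs with hr
  · rw [abs_of_nonneg hr] at hc₁ hc₂ ⊢
    rw [abs_of_nonneg (by linarith)]
    ring
  · push Not at hr
    rw [abs_of_neg hr] at hc₁ hc₂ ⊢
    rw [abs_of_nonpos (by linarith)]
    ring

lemma exists_sign_sum_mul_eq_zero_of_isLocalMin {ι : Type*} [Fintype ι] {r b : ι → ℝ}
    (hb : ∀ j, r j = 0 → b j = 0)
    (hmin : IsLocalMin (fun t : ℝ => ∑ j, |r j - t * b j|) 0) :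
    ∃ ε : ι → ℝ, (∀ j, ε j = 1 ∨ ε j = -1) ∧ ∑ j, ε j * b j = 0 := by
  set ε : ι → ℝ := fun j => if 0 ≤ r j then 1 else -1
  have hsmall : ∀ᶠ t in 𝓝 (0 : ℝ), ∀ j, |t * b j| ≤ |r j| := by
    refine eventually_all.mpr fun j => ?_
    by_cases hr : r j = 0
    · simp [hr, hb j hr]
    have hlim : Tendsto (fun t : ℝ => |t * b j|) (𝓝 0) (𝓝 0) := by
      simpa using ((continuous_id.mul continuous_const).abs.tendsto (0 : ℝ) :
        Tendsto (fun t : ℝ => |t * b j|) (𝓝 0) _)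
    exact hlim.eventually (eventually_le_nhds (abs_pos.mpr hr))
  have hlinear : (fun t : ℝ => ∑ j, |r j - t * b j|) =ᶠ[𝓝 0]
      fun t => ∑ j, |r j| - t * ∑ j, ε j * b j := by
    filter_upwards [hsmall] with t ht
    simp only [abs_sub_eq_abs_sub_sign_mul (ht _), Finset.sum_sub_distrib, Finset.mul_sum]
    congr 1
    exact Finset.sum_congr rfl fun j _ => by ring
  have hderiv : HasDerivAt (fun t : ℝ => ∑ j, |r j - t * b j|) (-∑ j, ε j * b j) 0 := by
    refine HasDerivAt.congr_of_eventuallyEq ?_ hlinear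
    simpa using ((hasDerivAt_id (0 : ℝ)).mul_const (∑ j, ε j * b j)).const_sub (∑ j, |r j|)
  refine ⟨ε, fun j => ?_, neg_eq_zero.mp (hmin.hasDerivAt_eq_zero hderiv)⟩
  by_cases hr : 0 ≤ r j <;> simp [ε, hr]

lemma eq_zero_of_sum_abs_add_eq {ι : Type*} [Fintype ι] {x y : ι → ℝ}
    (h : ∑ j, |x j + y j| = ∑ j, |x j| + ∑ j, |y j|) {j : ι} (hj : x j + y j = 0) :
    x j = 0 ∧ y j = 0 := by
  rw [← Finset.sum_add_distrib, Finset.sum_eq_sum_iff_of_le fun j _ => abs_add_le _ _] at h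
  have hzero := h j (Finset.mem_univ j)
  rw [hj, abs_zero, eq_comm, add_eq_zero_iff_of_nonneg (abs_nonneg _) (abs_nonneg _)] at hzero
  exact ⟨abs_eq_zero.mp hzero.1, abs_eq_zero.mp hzero.2⟩

lemma vecMul_apply_eq_mul_of_col {ι κ R : Type*} [Fintype ι] [NonUnitalNonAssocSemiring R]
    {B : Matrix ι κ R} {i : ι} {j : κ} (hcol : ∀ i', B i' j ≠ 0 → i' = i) (k : ι → R) :
    (k ᵥ* B) j = k i * B i j :=
  Finset.sum_eq_single i (fun i' _ hi' => by
    simp [show B i' j = 0 from not_imp_comm.mp (hcol i') hi']) (by simp)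

section Minimizers

variable {m n : ℕ} {B : Matrix (Fin m) (Fin n) ℝ} {a : Fin n → ℝ} {k k₁ k₂ : Fin m → ℝ}

lemma l1Obj_eq_sum_abs : l1Obj B a k = ∑ j, |(a - k ᵥ* B) j| :=
  rfl

lemma sub_midpoint_vecMul :
    a - ((2 : ℝ)⁻¹ • (k₁ + k₂)) ᵥ* B = (2 : ℝ)⁻¹ • ((a - k₁ ᵥ* B) + (a - k₂ ᵥ* B)) := by
  rw [smul_vecMul, add_vecMul]
  module

lemma l1Obj_midpoint :
    l1Obj B a ((2 : ℝ)⁻¹ • (k₁ + k₂)) = (∑ j, |(a - k₁ ᵥ* B) j + (a - k₂ ᵥ* B) j|) / 2 := by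
  simp only [l1Obj_eq_sum_abs, sub_midpoint_vecMul, Pi.smul_apply, Pi.add_apply, smul_eq_mul,
    abs_mul, ← Finset.mul_sum]
  norm_num
  ring

lemma sum_abs_residual_add_eq (hk₁ : k₁ ∈ optSet B a) (hk₂ : k₂ ∈ optSet B a) :
    ∑ j, |(a - k₁ ᵥ* B) j + (a - k₂ ᵥ* B) j| = l1Obj B a k₁ + l1Obj B a k₂ := by
  have htriangle : ∑ j, |(a - k₁ ᵥ* B) j + (a - k₂ ᵥ* B) j| ≤ l1Obj B a k₁ + l1Obj B a k₂ := by
    simp only [l1Obj_eq_sum_abs, ← Finset.sum_add_distrib]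
    exact Finset.sum_le_sum fun j _ => abs_add_le _ _
  have hmid := hk₁ ((2 : ℝ)⁻¹ • (k₁ + k₂))
  rw [l1Obj_midpoint] at hmid
  linarith [hk₁ k₂, hk₂ k₁]

lemma midpoint_mem_optSet (hk₁ : k₁ ∈ optSet B a) (hk₂ : k₂ ∈ optSet B a) :
    (2 : ℝ)⁻¹ • (k₁ + k₂) ∈ optSet B a := fun k' => by
  rw [l1Obj_midpoint, sum_abs_residual_add_eq hk₁ hk₂]
  linarith [hk₁ k', hk₂ k']

lemma exists_residual_eq_zero_of_mem_optSet {i : Fin m}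
    (hsign : ∀ ε : Fin n → ℝ, (∀ j, ε j = 1 ∨ ε j = -1) → ∑ j, ε j * B i j ≠ 0)
    (hk : k ∈ optSet B a) : ∃ j, B i j ≠ 0 ∧ (a - k ᵥ* B) j = 0 := by
  by_contra! hres
  have hmin : IsLocalMin (fun t : ℝ => ∑ j, |(a - k ᵥ* B) j - t * B i j|) 0 := by
    refine Eventually.of_forall fun t => ?_
    have hshift := hk (k + Pi.single i t)
    rw [l1Obj_eq_sum_abs, l1Obj_eq_sum_abs, add_vecMul, single_vecMul, ← sub_sub] at hshift
    simpa using hshift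
  obtain ⟨ε, hε, hsum⟩ := exists_sign_sum_mul_eq_zero_of_isLocalMin
    (fun j hj => not_not.mp fun hB => hres j hB hj) hmin
  exact hsign ε hε hsum

lemma exists_vecMul_eq_of_mem_optSet {i : Fin m}
    (hsign : ∀ ε : Fin n → ℝ, (∀ j, ε j = 1 ∨ ε j = -1) → ∑ j, ε j * B i j ≠ 0)
    (hk₁ : k₁ ∈ optSet B a) (hk₂ : k₂ ∈ optSet B a) :
    ∃ j, B i j ≠ 0 ∧ (k₁ ᵥ* B) j = (k₂ ᵥ* B) j := by
  obtain ⟨j, hBij, hj⟩ :=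
    exists_residual_eq_zero_of_mem_optSet hsign (midpoint_mem_optSet hk₁ hk₂)
  rw [sub_midpoint_vecMul, Pi.smul_apply, smul_eq_mul, mul_eq_zero, Pi.add_apply] at hj
  obtain ⟨h₁, h₂⟩ := eq_zero_of_sum_abs_add_eq (sum_abs_residual_add_eq hk₁ hk₂)
    (hj.resolve_left (by norm_num))
  rw [Pi.sub_apply, sub_eq_zero] at h₁ h₂
  exact ⟨j, hBij, h₁.symm.trans h₂⟩

end Minimizers

/-- If every column of `B` other than column `j₀` has at most one nonzero entry, and
for every row `i` and every sign vector `ε ∈ {-1,1}^n` the signed sum `∑ j, ε j * B i j`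
is nonzero, then `k ↦ ∑ i, k i * B i j₀` is a characteristic linear function of the
L1 minimization problem: it takes a single value on each optimal set `O_a`. -/
theorem characteristic_column_functional (m n : ℕ) (B : Matrix (Fin m) (Fin n) ℝ)
    (j₀ : Fin n)
    (hcol : ∀ j : Fin n, j ≠ j₀ → ∀ i₁ i₂ : Fin m, B i₁ j ≠ 0 → B i₂ j ≠ 0 → i₁ = i₂)
    (hsign : ∀ i : Fin m, ∀ ε : Fin n → ℝ, (∀ j, ε j = 1 ∨ ε j = -1) →
      ∑ j, ε j * B i j ≠ 0)
    (a : Fin n → ℝ) (k₁ k₂ : Fin m → ℝ)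
    (hk₁ : k₁ ∈ optSet B a) (hk₂ : k₂ ∈ optSet B a) :
    ∑ i, k₁ i * B i j₀ = ∑ i, k₂ i * B i j₀ := by
  by_cases hk : k₁ = k₂
  · rw [hk]
  obtain ⟨i, hi⟩ := Function.ne_iff.mp hk
  obtain ⟨j, hBij, hj⟩ := exists_vecMul_eq_of_mem_optSet (hsign i) hk₁ hk₂
  obtain rfl | hj₀ := eq_or_ne j j₀
  · exact hj
  · have hcol_j : ∀ i', B i' j ≠ 0 → i' = i := fun i' hi' => hcol j hj₀ i' i hi' hBij
    rw [vecMul_apply_eq_mul_of_col hcol_j, vecMul_apply_eq_mul_of_col hcol_j] at hj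
    exact absurd (mul_right_cancel₀ hBij hj) hi
end

section
/- Let t > 0 and γ > 0 be real numbers with t < (e − 1)γ. Define L : (0,∞) → ℝ by L(α) = γ·α·exp(−α(γ+t)) if α < 1/t, and L(α) = γ·α·exp(−αγ − 1) if α ≥ 1/t. Then L attains its maximum uniquely at α = 1/(t+γ): for every α > 0 with α ≠ 1/(t+γ), L(α) < L(1/(t+γ)) = (γ/(t+γ)) · exp(−1). -/
/-!
Writing `c = γ + t`, on `α < 1/t` the likelihood is `(γ/c) · x e^{-x}` with `x = αc`, and
`x e^{-x} < e^{-1}` unless `x = 1`; the peak `α = 1/c` lies in this branch since `1/c < 1/t`.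
On `α ≥ 1/t` it is `(αγ) e^{-αγ} · e^{-1} ≤ e^{-1} · e^{-1}`, and the hypothesis
`t < (e − 1)γ` says exactly that `e^{-1} < γ/c`, so this branch stays strictly below the peak.
-/

open Real

theorem Real.mul_exp_neg_lt_exp_neg_one {y : ℝ} (hy : y ≠ 1) : y * exp (-y) < exp (-1) := by
  have h_lt : y < exp (y - 1) := by
    simpa using add_one_lt_exp (sub_ne_zero.mpr hy)
  have h_mul_lt : y * exp (-y) < exp (y - 1) * exp (-y) := by gcongr
  simpa [← exp_add, sub_add_eq_add_sub] using h_mul_lt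

lemma mul_mul_exp_neg_mul_eq (γ α c : ℝ) (hc : c ≠ 0) :
    γ * α * exp (-α * c) = γ / c * ((α * c) * exp (-(α * c))) := by
  field_simp

lemma mul_one_div_mul_exp_neg_one_div_mul (γ c : ℝ) (hc : c ≠ 0) :
    γ * (1 / c) * exp (-(1 / c) * c) = γ / c * exp (-1) := by
  rw [mul_mul_exp_neg_mul_eq γ _ c hc, one_div_mul_cancel hc, one_mul]

lemma mul_mul_exp_neg_mul_lt {γ α c : ℝ} (hγ : 0 < γ) (hc : 0 < c) (hα : α ≠ 1 / c) :
    γ * α * exp (-α * c) < γ / c * exp (-1) := by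
  have hαc : α * c ≠ 1 := fun h => hα (eq_one_div_of_mul_eq_one_left h)
  rw [mul_mul_exp_neg_mul_eq γ α c hc.ne']
  exact mul_lt_mul_of_pos_left (mul_exp_neg_lt_exp_neg_one hαc) (by positivity)

lemma mul_mul_exp_neg_mul_sub_one_le (γ α : ℝ) :
    γ * α * exp (-α * γ - 1) ≤ exp (-1) * exp (-1) := by
  have h : γ * α * exp (-α * γ - 1) = (α * γ) * exp (-(α * γ)) * exp (-1) := by
    rw [show -α * γ - 1 = -(α * γ) + -1 by ring, exp_add]
    ring
  rw [h]
  exact mul_le_mul_of_nonneg_right (mul_exp_neg_le_exp_neg_one _) (exp_pos _).le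

lemma exp_neg_one_lt_div_add {t γ : ℝ} (hc : 0 < t + γ) (htγ : t < (exp 1 - 1) * γ) :
    exp (-1) < γ / (t + γ) := by
  rw [exp_neg, inv_lt_iff_one_lt_mul₀ (exp_pos 1), div_mul_eq_mul_div, one_lt_div hc]
  linarith

/-- For `t, γ > 0` with `t < (e − 1)γ`, the posterior single-event likelihood
`L(α) = γ·α·exp(−α(γ+t))` for `α < 1/t` and `L(α) = γ·α·exp(−αγ − 1)` for `α ≥ 1/t`
attains its maximum on `(0,∞)` uniquely at `α = 1/(t+γ)`, with maximal value
`(γ/(t+γ)) · exp(−1)`. -/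
theorem posterior_likelihood_max (t γ : ℝ) (ht : 0 < t) (hγ : 0 < γ)
    (htγ : t < (Real.exp 1 - 1) * γ)
    (L : ℝ → ℝ)
    (hL : ∀ α : ℝ, 0 < α →
      L α = if α < 1 / t then γ * α * Real.exp (-α * (γ + t))
            else γ * α * Real.exp (-α * γ - 1)) :
    L (1 / (t + γ)) = (γ / (t + γ)) * Real.exp (-1) ∧
    ∀ α : ℝ, 0 < α → α ≠ 1 / (t + γ) → L α < L (1 / (t + γ)) := by
  have hc : 0 < t + γ := add_pos ht hγ
  have hpeak_lt : 1 / (t + γ) < 1 / t := one_div_lt_one_div_of_lt ht (by linarith)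
  have hpeak : L (1 / (t + γ)) = γ / (t + γ) * exp (-1) := by
    rw [hL _ (by positivity), if_pos hpeak_lt, add_comm γ t]
    exact mul_one_div_mul_exp_neg_one_div_mul γ _ hc.ne'
  refine ⟨hpeak, fun α hα hne => ?_⟩
  rw [hpeak, hL α hα]
  split_ifs
  · rw [add_comm γ t]
    exact mul_mul_exp_neg_mul_lt hγ hc hne
  · calc γ * α * exp (-α * γ - 1) ≤ exp (-1) * exp (-1) := mul_mul_exp_neg_mul_sub_one_le γ α
      _ < γ / (t + γ) * exp (-1) :=
        mul_lt_mul_of_pos_right (exp_neg_one_lt_div_add hc htγ) (exp_pos _)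
end
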